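/- Let n ≥ 1, and consider the label set L = {−1,1}^n with coordinatewise negation as involution. Call a multiset m over L neutral if for every coordinate i ∈ {1,…,n} some element of m has i-th coordinate −1 and some element has i-th coordinate +1; for a non-neutral multiset m, let Φ(m) be the least coordinate on which all elements of m agree. Define M^0 to be the set of all 1-element multisets over L, and recursively for i = 1,…,n: partition M^{i−1} into M^{i−1}_+ ⊔ M^{i−1}_− by declaring m ∈ M^{i−1}_+ iff the common value of the elements of m at coordinate Φ(m) is +1; then let M^i be the set of non-neutral multisets m of size i+1 such that an odd number of the i+1 one-element deletions of m yield a multiset in M^{i−1}_+. Then for every 0 ≤ i ≤ n, every m ∈ M^i satisfies Φ(m) ≥ i+1; in particular M^n = ∅. -/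
import Mathlib


open scoped Classical

noncomputable section

/-- `x` is a cubical label: a vertex of the cube `{−1,1}ⁿ` (coordinates in `ℤ`). -/
def cubeLabel (n : ℕ) (x : Fin n → ℤ) : Prop := ∀ i, x i = 1 ∨ x i = -1

/-- The multiset `m` of cubical labels is neutral: every coordinate takes both the
value `−1` and the value `+1` among the elements of `m`. -/
def neutralM {n : ℕ} (m : Multiset (Fin n → ℤ)) : Prop :=
  ∀ i : Fin n, (∃ x ∈ m, x i = -1) ∧ (∃ x ∈ m, x i = 1)

/-- For a non-neutral multiset of cubical labels, the least coordinate on which all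
elements agree exists; `posPhi m` says that the common value at this least agreeing
coordinate is `+1`. -/
def posPhi {n : ℕ} (m : Multiset (Fin n → ℤ)) : Prop :=
  ∃ j : Fin n, (∀ x ∈ m, x j = 1) ∧
    ∀ j' : Fin n, j' < j → ∃ x ∈ m, ∃ y ∈ m, x j' ≠ y j'

/-- The sets `Mⁱ` of the parity proof of Tucker's lemma with cubical labels: `M 0` is
the set of all `1`-element multisets over `{−1,1}ⁿ`; `M (i+1)` is the set of
non-neutral multisets of size `i + 2` over `{−1,1}ⁿ` an odd number of whose
one-element deletions lie in the positive half `Mⁱ₊ = {m ∈ Mⁱ | posPhi m}`. -/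
def MC (n : ℕ) : ℕ → Set (Multiset (Fin n → ℤ))
  | 0 => {m | Multiset.card m = 1 ∧ ∀ x ∈ m, cubeLabel n x}
  | (i + 1) => {m | Multiset.card m = i + 2 ∧ (∀ x ∈ m, cubeLabel n x) ∧
      ¬neutralM m ∧
      Odd (Multiset.card ((m.map (fun a => m.erase a)).filter
        (fun t => t ∈ MC n i ∧ posPhi t)))}

lemma card_filter_map_eq_sum {α β : Type*} (p : β → Prop) [DecidablePred p]
    (e : α → β) (s : Multiset α) :
    Multiset.card ((s.map e).filter p) = (s.map (fun a => if p (e a) then 1 else 0)).sum := by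
  induction s using Multiset.induction with
  | empty => simp
  | cons a s ih => by_cases h : p (e a) <;> simp [h, ih, Nat.add_comm]

lemma sum_map_mod_two {α : Type*} (m : Multiset α) (f g : α → ℕ)
    (h : ∀ a ∈ m, f a % 2 = g a % 2) :
    (m.map f).sum % 2 = (m.map g).sum % 2 := by
  induction m using Multiset.induction with
  | empty => rfl
  | cons a s ih =>
    simp only [Multiset.map_cons, Multiset.sum_cons]
    rw [Nat.add_mod, h a (Multiset.mem_cons_self a s),
      ih (fun b hb => h b (Multiset.mem_cons_of_mem hb)), ← Nat.add_mod]

lemma even_double_sum {α : Type*} [DecidableEq α] (f : α → α → ℕ)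
    (hf : ∀ a b, f a b = f b a) (m : Multiset α) :
    Even ((m.map (fun a => ((m.erase a).map (f a)).sum)).sum) := by
  induction m using Multiset.induction with
  | empty => simp
  | cons a s ih =>
    have key : ∀ c ∈ s, (a ::ₘ s).erase c = a ::ₘ s.erase c := by
      intro c hc
      by_cases h : c = a
      · subst h; rw [Multiset.erase_cons_head, Multiset.cons_erase hc]
      · rw [Multiset.erase_cons_tail _ (fun hh => h hh.symm)]
    rw [Multiset.map_cons, Multiset.sum_cons, Multiset.erase_cons_head]
    have h1 : (s.map (fun c => (((a ::ₘ s).erase c).map (f c)).sum))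
        = s.map (fun c => f c a + ((s.erase c).map (f c)).sum) :=
      Multiset.map_congr rfl (fun c hc => by
        rw [key c hc, Multiset.map_cons, Multiset.sum_cons])
    rw [h1, Multiset.sum_map_add]
    have h2 : s.map (fun c => f c a) = s.map (f a) :=
      Multiset.map_congr rfl (fun c _ => hf c a)
    rw [h2]
    obtain ⟨t, ht⟩ := ih
    exact ⟨(s.map (f a)).sum + t, by omega⟩

lemma MC_key (n : ℕ) : ∀ i, ∀ m ∈ MC n i, ∀ j : Fin n, (j : ℕ) < i →
    ∃ x ∈ m, ∃ y ∈ m, x j ≠ y j := by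
  intro i
  induction i with
  | zero => intro m _ j hj; exact absurd hj (Nat.not_lt_zero _)
  | succ i ih =>
    intro m hm j hj
    simp only [MC, Set.mem_setOf_eq] at hm
    obtain ⟨hcard, hlab, hneu, hodd⟩ := hm
    by_contra hcon
    push_neg at hcon
    have hm0 : m ≠ 0 := by
      intro h; rw [h] at hcard; simp at hcard
    obtain ⟨v, hv⟩ := Multiset.exists_mem_of_ne_zero hm0
    have hagree : ∀ x ∈ m, x j = v j := fun x hx => hcon x hx v hv
    have herase_card : ∀ a ∈ m, Multiset.card (m.erase a) = i + 1 := by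
      intro a ha
      rw [Multiset.card_erase_of_mem ha, hcard]
      rfl
    have herase_lab : ∀ a, ∀ x ∈ m.erase a, cubeLabel n x :=
      fun a x hx => hlab x (Multiset.mem_of_mem_erase hx)
    rcases hlab v hv j with hv1 | hv1
    · -- common value 1
      cases i with
      | zero =>
        -- every erase is in MC n 0 with posPhi; count = card m = 2, even
        have hj0 : (j : ℕ) = 0 := by omega
        have hall_cond : ∀ t ∈ m.map (fun a => m.erase a),
            (t ∈ MC n 0 ∧ posPhi t) := by
          intro t ht
          obtain ⟨a, ha, rfl⟩ := Multiset.mem_map.mp ht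
          refine ⟨⟨herase_card a ha, herase_lab a⟩, j, ?_, ?_⟩
          · intro x hx
            rw [hagree x (Multiset.mem_of_mem_erase hx), hv1]
          · intro j' hj'
            have : (j' : ℕ) < (j : ℕ) := hj'
            omega
        have hK : Multiset.card ((m.map (fun a => m.erase a)).filter
            (fun t => t ∈ MC n 0 ∧ posPhi t)) = 2 := by
          rw [Multiset.filter_eq_self.mpr hall_cond, Multiset.card_map, hcard]
        rw [hK, Nat.odd_iff] at hodd
        omega
      | succ i' =>
        set Q : Multiset (Fin n → ℤ) → Prop := fun s => s ∈ MC n i' ∧ posPhi s with hQ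
        set c : (Fin n → ℤ) → ℕ := fun a =>
          ((m.erase a).map (fun b => if Q ((m.erase a).erase b) then 1 else 0)).sum with hc
        have hiff : ∀ a ∈ m, ((m.erase a ∈ MC n (i' + 1) ∧ posPhi (m.erase a)) ↔ Odd (c a)) := by
          intro a ha
          have hcount : Multiset.card (((m.erase a).map (fun b => (m.erase a).erase b)).filter Q)
              = c a := card_filter_map_eq_sum Q _ _
          constructor
          · rintro ⟨htM, -⟩
            have := htM.2.2.2
            rwa [hcount] at this
          · intro hOddc
            have htM : m.erase a ∈ MC n (i' + 1) := by
              refine ⟨herase_card a ha, herase_lab a, ?_, ?_⟩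
              · intro hneu'
                obtain ⟨x, hx, hx1⟩ := (hneu' j).1
                rw [hagree x (Multiset.mem_of_mem_erase hx), hv1] at hx1
                norm_num at hx1
              · rwa [hcount]
            refine ⟨htM, j, ?_, ?_⟩
            · intro x hx
              rw [hagree x (Multiset.mem_of_mem_erase hx), hv1]
            · intro j' hj'
              refine ih _ htM j' ?_
              have : (j' : ℕ) < (j : ℕ) := hj'
              omega
        have hK : Multiset.card ((m.map (fun a => m.erase a)).filter
              (fun t => t ∈ MC n (i' + 1) ∧ posPhi t))
            = (m.map (fun a => if (m.erase a ∈ MC n (i' + 1) ∧ posPhi (m.erase a))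
                then 1 else 0)).sum :=
          card_filter_map_eq_sum _ _ _
        have hmod : ∀ a ∈ m, (if (m.erase a ∈ MC n (i' + 1) ∧ posPhi (m.erase a))
            then 1 else 0) % 2 = c a % 2 := by
          intro a ha
          by_cases h : Odd (c a)
          · rw [if_pos ((hiff a ha).mpr h)]
            rw [Nat.odd_iff] at h
            omega
          · rw [if_neg (fun hcond => h ((hiff a ha).mp hcond))]
            rw [Nat.odd_iff] at h
            omega
        have heven : Even ((m.map c).sum) := by
          have := even_double_sum (fun a b => if Q ((m.erase a).erase b) then 1 else 0)
            (fun a b => by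
              show (if Q ((m.erase a).erase b) then 1 else 0)
                  = (if Q ((m.erase b).erase a) then 1 else 0)
              rw [Multiset.erase_comm]) m
          exact this
        have h2 : (m.map (fun a => if (m.erase a ∈ MC n (i' + 1) ∧ posPhi (m.erase a))
            then 1 else 0)).sum % 2 = (m.map c).sum % 2 :=
          sum_map_mod_two _ _ _ hmod
        rw [Nat.odd_iff, hK, h2] at hodd
        rw [Nat.even_iff] at heven
        omega

    · -- common value -1 : filter is empty
      have hK : Multiset.card ((m.map (fun a => m.erase a)).filter
          (fun t => t ∈ MC n i ∧ posPhi t)) = 0 := by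
        rw [Multiset.card_eq_zero, Multiset.filter_eq_nil]
        rintro t ht ⟨htM, j₀, hall, hlt⟩
        obtain ⟨a, ha, rfl⟩ := Multiset.mem_map.mp ht
        rcases lt_trichotomy j₀ j with h | h | h
        · have hj₀ : (j₀ : ℕ) < i := by
            have h1 : (j₀ : ℕ) < (j : ℕ) := h
            omega
          obtain ⟨x, hx, y, hy, hxy⟩ := ih _ htM j₀ hj₀
          exact hxy ((hall x hx).trans (hall y hy).symm)
        · subst h
          have : 0 < Multiset.card (m.erase a) := by rw [herase_card a ha]; omega
          have hne : m.erase a ≠ 0 := by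
            intro hz; rw [hz] at this; simp at this
          obtain ⟨x, hx⟩ := Multiset.exists_mem_of_ne_zero hne
          have h1 := hall x hx
          have h2 := hagree x (Multiset.mem_of_mem_erase hx)
          rw [h2, hv1] at h1
          norm_num at h1
        · obtain ⟨x, hx, y, hy, hxy⟩ := hlt j h
          exact hxy ((hagree x (Multiset.mem_of_mem_erase hx)).trans
            (hagree y (Multiset.mem_of_mem_erase hy)).symm)
      rw [hK] at hodd
      simp at hodd
/-- In the parity proof of Tucker's lemma with cubical labels
(label set `{−1,1}ⁿ`, forbidden labellings the neutral ones, partition rule "the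
common value at the least agreeing coordinate is `+1`"), for every `0 ≤ i ≤ n` and
every `m ∈ Mⁱ` one has `Φ(m) ≥ i + 1`: the elements of `m` do not all agree on any of
the first `i` coordinates.  In particular `Mⁿ = ∅`. -/
theorem cubical_parity_invariant (n : ℕ) (hn : 1 ≤ n) :
    (∀ i ≤ n, ∀ m ∈ MC n i, ∀ j : Fin n, (j : ℕ) < i →
      ∃ x ∈ m, ∃ y ∈ m, x j ≠ y j) ∧ MC n n = ∅ := by

  constructor
  · intro i _ m hm j hj
    exact MC_key n i m hm j hj
  · rw [Set.eq_empty_iff_forall_notMem]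
    intro m hm
    obtain ⟨k, rfl⟩ : ∃ k, n = k + 1 := ⟨n - 1, by omega⟩
    have hm' := hm
    simp only [MC, Set.mem_setOf_eq] at hm'
    obtain ⟨hcard, hlab, hneu, -⟩ := hm'
    rw [neutralM] at hneu
    push_neg at hneu
    obtain ⟨j₀, hj₀⟩ := hneu
    obtain ⟨x, hx, y, hy, hxy⟩ := MC_key (k+1) (k+1) m hm j₀ j₀.isLt
    rcases hlab x hx j₀ with h1 | h1 <;> rcases hlab y hy j₀ with h2 | h2
    · exact hxy (h1.trans h2.symm)
    · exact hj₀ ⟨y, hy, h2⟩ x hx h1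
    · exact hj₀ ⟨x, hx, h1⟩ y hy h2
    · exact hxy (h1.trans h2.symm)


end
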